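/- For all natural numbers m and n with m ≥ n and 2m ≥ n+1, one has (1/(2·4^m·m!))·Σ_{k=0}^{m} C(m,k)·(4k+1)·(2k)ⁿ·(−1)^k / (k+1/2)_{m+1} = (2ⁿ·(2m−n−1)!)/((m!)²·(4m+1)!!)·[4·p_{n+1}(m) + (2m−n)·p_n(m)]. -/

import Mathlib

/-!
Expand `(2k)ⁿ = 2ⁿ ∑ⱼ S(n,j)·k(k-1)⋯(k-j+1)`. Since
`C(m,k)·k(k-1)⋯(k-j+1) = m(m-1)⋯(m-j+1)·C(m-j,k-j)`, the `j`-th inner sum is an alternating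
binomial sum, which the partial-fraction identity
`∑ᵢ (-1)ⁱ C(M,i) / (a+i)_{L+1} = (L+M)! / (L!·(a)_{L+M+1})` evaluates in closed form.
On the other side `(2m-n)!·p_n(m) = ∑ⱼ S(n,j)·(-m)ⱼ(1/2)ⱼ(2m-j)!`, and the recurrence
`S(n+1,j+1) = (j+1)·S(n,j+1) + S(n,j)` rewrites `4p_{n+1}(m) + (2m-n)p_n(m)` as a sum against
`S(n,j)` as well. Term by term, both sides are the same multiple of
`(4m+1)·j·(-m)ⱼ(1/2)ⱼ(2m-j-1)!`.
-/

open Polynomial Finset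

/-- The Pochhammer symbol (rising factorial) `(α)_k`. -/
noncomputable def poch (α : ℝ) (k : ℕ) : ℝ := ∏ i ∈ Finset.range k, (α + i)

/-- The Stirling numbers of the second kind. -/
noncomputable def stirling2 (n k : ℕ) : ℝ :=
  (1 / (Nat.factorial k) : ℝ) *
    ∑ j ∈ Finset.range (k + 1), (k.choose j : ℝ) * (-1) ^ (k - j) * (j : ℝ) ^ n

/-- The polynomial `p_n(m)`. -/
noncomputable def pPoly (n : ℕ) (m : ℝ) : ℝ :=
  ∑ k ∈ Finset.range (n + 1),
    stirling2 n k * poch (-m) k * poch (1 / 2) k * poch (2 * m - n + 1) (n - k)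

/-- The odd double factorial `(2j+1)!! = 1·3·5⋯(2j+1)`. -/
noncomputable def oddDF (j : ℕ) : ℝ := ∏ i ∈ Finset.range (j + 1), (2 * (i : ℝ) + 1)

open scoped Nat

lemma poch_eq_eval_ascPochhammer (a : ℝ) (k : ℕ) : poch a k = (ascPochhammer ℝ k).eval a := by
  induction k with
  | zero => simp [poch]
  | succ k ih => rw [poch, prod_range_succ, ← poch, ih, ascPochhammer_succ_eval]

lemma poch_succ (a : ℝ) (k : ℕ) : poch a (k + 1) = poch a k * (a + k) :=
  prod_range_succ _ _

lemma poch_succ_left (a : ℝ) (k : ℕ) : poch a (k + 1) = a * poch (a + 1) k := by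
  simp only [poch_eq_eval_ascPochhammer, ascPochhammer_succ_left, eval_mul, eval_X, eval_comp,
    eval_add, eval_one]

lemma poch_add (a : ℝ) (j r : ℕ) : poch a (j + r) = poch a j * poch (a + j) r := by
  simp only [poch_eq_eval_ascPochhammer, ← ascPochhammer_mul, eval_mul, eval_comp, eval_add,
    eval_X, eval_natCast]

lemma poch_pos {a : ℝ} (ha : 0 < a) (k : ℕ) : 0 < poch a k := by
  rw [poch_eq_eval_ascPochhammer]
  exact ascPochhammer_pos k a ha

lemma factorial_mul_poch (r n : ℕ) : (r ! : ℝ) * poch (r + 1) n = (r + n)! := by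
  rw [poch_eq_eval_ascPochhammer, factorial_mul_ascPochhammer]

lemma poch_neg_natCast (m j : ℕ) : poch (-m) j = (-1) ^ j * m.descFactorial j := by
  rw [poch_eq_eval_ascPochhammer, ascPochhammer_eval_neg_eq_descPochhammer,
    descPochhammer_eval_eq_descFactorial]

lemma oddDF_eq_two_pow_mul_poch (j : ℕ) : oddDF j = 2 ^ (j + 1) * poch (1 / 2) (j + 1) := by
  rw [oddDF, poch, ← card_range (j + 1), ← prod_const, card_range, ← prod_mul_distrib]
  exact prod_congr rfl fun i _ => by ring

lemma factorial_mul_stirling2 (n k : ℕ) :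
    (k ! : ℝ) * stirling2 n k
      = ∑ j ∈ range (k + 1), (k.choose j : ℝ) * (-1) ^ (k - j) * (j : ℝ) ^ n := by
  rw [stirling2, ← mul_assoc, mul_one_div_cancel (by positivity), one_mul]

lemma factorial_mul_stirling2_eq_fwdDiff_iter (n k : ℕ) :
    (k ! : ℝ) * stirling2 n k = (fwdDiff 1)^[k] (fun x : ℝ => x ^ n) 0 := by
  rw [factorial_mul_stirling2, fwdDiff_iter_eq_sum_shift]
  refine sum_congr rfl fun j _ => ?_
  simp [zsmul_eq_mul, mul_comm]

lemma stirling2_eq_zero_of_lt {n k : ℕ} (h : n < k) : stirling2 n k = 0 := by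
  have hk := factorial_mul_stirling2_eq_fwdDiff_iter n k
  rw [fwdDiff_iter_pow_eq_zero_of_lt h, Pi.zero_apply] at hk
  exact (mul_eq_zero.mp hk).resolve_left (by positivity)

lemma stirling2_succ_zero (n : ℕ) : stirling2 (n + 1) 0 = 0 := by
  simp [stirling2]

lemma stirling2_succ_succ (n k : ℕ) :
    stirling2 (n + 1) (k + 1) = (k + 1) * stirling2 n (k + 1) + stirling2 n k := by
  have hterm : ∀ j ∈ range (k + 2),
      ((k + 1).choose j : ℝ) * (-1) ^ (k + 1 - j) * (j : ℝ) ^ (n + 1)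
        = (k + 1) * (((k + 1).choose j : ℝ) * (-1) ^ (k + 1 - j) * (j : ℝ) ^ n)
          + (k + 1) * ((k.choose j : ℝ) * (-1) ^ (k - j) * (j : ℝ) ^ n) := by
    intro j hj
    rcases (Nat.lt_succ_iff.mp (mem_range.mp hj)).lt_or_eq with hjk | rfl
    · have hchoose : (k.choose j : ℝ) * (k + 1) = (k + 1).choose j * ((k : ℝ) + 1 - j) := by
        have h := congrArg (Nat.cast : ℕ → ℝ) (Nat.choose_mul_succ_eq k j)
        push_cast [Nat.cast_sub (by omega : j ≤ k + 1)] at h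
        exact h
      rw [show k + 1 - j = k - j + 1 by omega, pow_succ, pow_succ]
      linear_combination (-(-1 : ℝ) ^ (k - j) * (j : ℝ) ^ n) * hchoose
    · simp [Nat.choose_succ_self, pow_succ, mul_comm]
  have hsum := sum_congr rfl hterm
  rw [sum_add_distrib, ← mul_sum, ← mul_sum,
    sum_range_succ (fun j => (k.choose j : ℝ) * (-1) ^ (k - j) * (j : ℝ) ^ n),
    Nat.choose_succ_self,
    Nat.cast_zero, zero_mul, zero_mul, add_zero, ← factorial_mul_stirling2,
    ← factorial_mul_stirling2, ← factorial_mul_stirling2, Nat.factorial_succ] at hsum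
  have hk : (k ! : ℝ) * (k + 1) ≠ 0 := by positivity
  apply mul_left_cancel₀ hk
  push_cast at hsum
  linear_combination hsum

lemma sum_stirling2_succ_mul (n : ℕ) (v : ℕ → ℝ) :
    ∑ k ∈ range (n + 2), stirling2 (n + 1) k * v k
      = ∑ k ∈ range (n + 1), stirling2 n k * (k * v k + v (k + 1)) := by
  have hshift : ∑ k ∈ range (n + 1), ((k : ℝ) + 1) * stirling2 n (k + 1) * v (k + 1)
      = ∑ k ∈ range (n + 1), k * stirling2 n k * v k := by
    have h := sum_range_succ' (fun k => (k : ℝ) * stirling2 n k * v k) (n + 1)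
    rw [sum_range_succ, stirling2_eq_zero_of_lt (lt_add_one n)] at h
    push_cast at h
    linarith
  rw [sum_range_succ', stirling2_succ_zero, zero_mul, add_zero]
  simp_rw [stirling2_succ_succ, add_mul (_ * _), sum_add_distrib]
  rw [hshift, ← sum_add_distrib]
  exact sum_congr rfl fun k _ => by ring

lemma pow_eq_sum_stirling2_mul_descPochhammer (x : ℝ) (n : ℕ) :
    x ^ n = ∑ k ∈ range (n + 1), stirling2 n k * (descPochhammer ℝ k).eval x := by
  induction n with
  | zero => simp [stirling2]
  | succ n ih =>
    rw [sum_stirling2_succ_mul, pow_succ, ih, sum_mul]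
    refine sum_congr rfl fun k _ => ?_
    rw [descPochhammer_succ_eval]
    ring

lemma sum_mul_pow_eq_sum_stirling2_mul (n N : ℕ) (g : ℕ → ℝ) :
    ∑ k ∈ range N, g k * (k : ℝ) ^ n
      = ∑ j ∈ range (n + 1),
          stirling2 n j * ∑ k ∈ range N, (k.descFactorial j : ℝ) * g k := by
  simp_rw [pow_eq_sum_stirling2_mul_descPochhammer, descPochhammer_eval_eq_descFactorial, mul_sum]
  rw [sum_comm]
  exact sum_congr rfl fun j _ => sum_congr rfl fun k _ => by ring

lemma sum_choose_mul_neg_one_pow_div_poch (L M : ℕ) {a : ℝ} (ha : 0 < a) :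
    ∑ i ∈ range (M + 1), (M.choose i : ℝ) * ((-1) ^ i / poch (a + i) (L + 1))
      = (L + M)! / (L ! * poch a (L + M + 1)) := by
  induction M generalizing a with
  | zero =>
    have := poch_pos ha (L + 1)
    simp [field]
  | succ M ih =>
    rw [sum_choose_succ_mul (fun i _ => (-1) ^ i / poch (a + i) (L + 1)), ih ha]
    have hshift : ∀ i ∈ range (M + 1),
        (M.choose i : ℝ) * ((-1) ^ (i + 1) / poch (a + ↑(i + 1)) (L + 1))
        = -((M.choose i : ℝ) * ((-1) ^ i / poch (a + 1 + i) (L + 1))) := by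
      intro i _
      rw [pow_succ]
      push_cast
      ring_nf
    rw [sum_congr rfl hshift, sum_neg_distrib, ih (by linarith), ← add_assoc,
      poch_succ (a + 1), poch_succ_left a (L + M), poch_succ_left a (L + M + 1), poch_succ (a + 1),
      Nat.factorial_succ]
    have := poch_pos (by linarith : 0 < a + 1) (L + M)
    field_simp
    push_cast
    ring

lemma sum_descFactorial_mul_choose_mul (m j : ℕ) (hj : j ≤ m) (f : ℕ → ℝ) :
    ∑ k ∈ range (m + 1), (k.descFactorial j : ℝ) * ((m.choose k : ℝ) * f k)
      = m.descFactorial j * ∑ i ∈ range (m - j + 1), ((m - j).choose i : ℝ) * f (j + i) := by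
  obtain ⟨M, rfl⟩ := Nat.exists_eq_add_of_le hj
  have hlow : ∀ k ∈ range j, (k.descFactorial j : ℝ) * (((j + M).choose k : ℝ) * f k) = 0 :=
    fun k hk => by simp [Nat.descFactorial_eq_zero_iff_lt.mpr (mem_range.mp hk)]
  rw [show j + M + 1 = j + (M + 1) by ring, sum_range_add, sum_eq_zero hlow, zero_add,
    Nat.add_sub_cancel_left, mul_sum]
  refine sum_congr rfl fun i _ => ?_
  have hchoose := Nat.choose_mul (n := j + M) (Nat.le_add_right j i)
  simp only [Nat.add_sub_cancel_left] at hchoose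
  have hnat : (j + i).descFactorial j * (j + M).choose (j + i)
      = (j + M).descFactorial j * M.choose i := by
    rw [Nat.descFactorial_eq_factorial_mul_choose, Nat.descFactorial_eq_factorial_mul_choose,
      mul_assoc, mul_comm ((j + i).choose j), hchoose, mul_assoc]
  rw [← mul_assoc, ← mul_assoc, ← Nat.cast_mul, hnat, Nat.cast_mul]

lemma four_mul_sub_one_div_poch_succ {x : ℝ} (hx : 0 < x) (L : ℕ) :
    (4 * x - 1) / poch x (L + 1) = 4 / poch x L - (4 * L + 1) / poch x (L + 1) := by
  have := poch_pos hx L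
  have : 0 < x + L := by positivity
  rw [poch_succ]
  field_simp
  ring

lemma sum_descFactorial_mul_choose_mul_div_poch_of_le (m j : ℕ) (hj : j ≤ m + 1) :
    ∑ k ∈ range (m + 1 + 1), (k.descFactorial j : ℝ) *
        (((m + 1).choose k : ℝ) * ((4 * k + 1) * (-1) ^ k / poch (k + 1 / 2) (m + 1 + 1)))
      = (4 * (m + 1) + 1) * j * poch (-(m + 1 : ℕ)) j * poch (1 / 2) j * (2 * (m + 1) - j - 1)!
          / ((m + 1)! * poch (1 / 2) (2 * (m + 1) + 1)) := by
  obtain ⟨M, hM⟩ := Nat.exists_eq_add_of_le hj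
  have hsplit : ∀ i ∈ range (M + 1), (M.choose i : ℝ) *
      ((4 * ↑(j + i) + 1) * (-1) ^ (j + i) / poch (↑(j + i) + 1 / 2) (m + 1 + 1))
      = (-1) ^ j * (4 * ((M.choose i : ℝ) * ((-1) ^ i / poch (j + 1 / 2 + i) (m + 1)))
        - (4 * (m + 1) + 1) *
          ((M.choose i : ℝ) * ((-1) ^ i / poch (j + 1 / 2 + i) (m + 1 + 1)))) := by
    intro i _
    have hsub := four_mul_sub_one_div_poch_succ (by positivity : (0 : ℝ) < j + 1 / 2 + i) (m + 1)
    push_cast at hsub ⊢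
    rw [mul_div_right_comm, show 4 * ((j : ℝ) + i) + 1 = 4 * (j + 1 / 2 + i) - 1 by ring,
      show (j : ℝ) + i + 1 / 2 = j + 1 / 2 + i by ring, hsub, pow_add]
    ring
  rw [sum_descFactorial_mul_choose_mul _ _ hj, show m + 1 - j = M by omega,
    sum_congr rfl hsplit, ← mul_sum, sum_sub_distrib, ← mul_sum, ← mul_sum,
    sum_choose_mul_neg_one_pow_div_poch _ _ (by positivity),
    sum_choose_mul_neg_one_pow_div_poch _ _ (by positivity)]
  rw [show m + 1 + M = m + M + 1 by ring, show 2 * (m + 1) - j - 1 = m + M by omega,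
    show 2 * (m + 1) + 1 = j + (m + M + 1 + 1) by omega, poch_add (1 / 2) j,
    add_comm (1 / 2 : ℝ), poch_succ _ (m + M + 1), Nat.factorial_succ (m + M),
    Nat.factorial_succ m, poch_neg_natCast]
  have := poch_pos (by positivity : (0 : ℝ) < j + 1 / 2) (m + M + 1)
  have := poch_pos (by norm_num : (0 : ℝ) < 1 / 2) j
  have hj : (j : ℝ) = m + 1 - M := by rw [eq_sub_iff_add_eq]; exact_mod_cast hM.symm
  push_cast
  field_simp
  rw [hj]
  ring

lemma sum_descFactorial_mul_choose_mul_div_poch (m j : ℕ) (hj : j < 2 * m) :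
    ∑ k ∈ range (m + 1), (k.descFactorial j : ℝ) *
        ((m.choose k : ℝ) * ((4 * k + 1) * (-1) ^ k / poch (k + 1 / 2) (m + 1)))
      = (4 * m + 1) * j * poch (-m) j * poch (1 / 2) j * (2 * m - j - 1)!
          / (m ! * poch (1 / 2) (2 * m + 1)) := by
  rcases lt_or_ge m j with hmj | hjm
  · have hzero : ∀ k ∈ range (m + 1), (k.descFactorial j : ℝ) *
        ((m.choose k : ℝ) * ((4 * k + 1) * (-1) ^ k / poch (k + 1 / 2) (m + 1))) = 0 :=
      fun k hk => by
        simp [Nat.descFactorial_eq_zero_iff_lt.mpr ((mem_range.mp hk).trans_le hmj)]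
    rw [sum_eq_zero hzero]
    simp [poch_neg_natCast, Nat.descFactorial_eq_zero_iff_lt.mpr hmj]
  · obtain ⟨m, rfl⟩ : ∃ m', m = m' + 1 := ⟨m - 1, by omega⟩
    exact_mod_cast sum_descFactorial_mul_choose_mul_div_poch_of_le m j hjm

noncomputable def pWeight (m k : ℕ) : ℝ := poch (-m) k * poch (1 / 2) k * (2 * m - k)!

lemma factorial_mul_pPoly (m n : ℕ) (h : n ≤ 2 * m) :
    ((2 * m - n)! : ℝ) * pPoly n m = ∑ k ∈ range (n + 1), stirling2 n k * pWeight m k := by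
  rw [pPoly, mul_sum]
  refine sum_congr rfl fun k hk => ?_
  have harg : 2 * (m : ℝ) - n + 1 = ((2 * m - n : ℕ) : ℝ) + 1 := by
    rw [Nat.cast_sub h]
    push_cast
    ring
  have hfac := factorial_mul_poch (2 * m - n) (n - k)
  rw [show 2 * m - n + (n - k) = 2 * m - k by have := mem_range.mp hk; omega] at hfac
  rw [pWeight, harg, ← hfac]
  ring

lemma four_mul_add_one_mul_pWeight_add (m j : ℕ) (hj : j < 2 * m) :
    (4 * j + 1) * pWeight m j + 4 * pWeight m (j + 1)
      = (4 * m + 1) * j * poch (-m) j * poch (1 / 2) j * (2 * m - j - 1)! := by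
  obtain ⟨r, hr⟩ : ∃ r, 2 * m - j = r + 1 := ⟨2 * m - j - 1, by omega⟩
  have hr' : (r : ℝ) + 1 = 2 * m - j := by
    rw [← Nat.cast_ofNat, ← Nat.cast_mul, ← Nat.cast_sub hj.le, hr]
    push_cast
    ring
  rw [pWeight, pWeight, poch_succ, poch_succ, show 2 * m - (j + 1) = r by omega,
    show 2 * m - j - 1 = r by omega, hr, Nat.factorial_succ]
  push_cast
  linear_combination (4 * j + 1) * poch (-m) j * poch (1 / 2) j * r ! * hr'

lemma factorial_mul_pPoly_combination (m n : ℕ) (h : n < 2 * m) :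
    ((2 * m - n - 1)! : ℝ) * (4 * pPoly (n + 1) m + (2 * m - n) * pPoly n m)
      = ∑ j ∈ range (n + 1), stirling2 n j *
          ((4 * m + 1) * j * poch (-m) j * poch (1 / 2) j * (2 * m - j - 1)!) := by
  have hfac : ((2 * m - n)! : ℝ) = (2 * m - n) * (2 * m - n - 1)! := by
    rw [show 2 * m - n = 2 * m - n - 1 + 1 by omega, Nat.factorial_succ]
    push_cast [Nat.cast_sub h.le, Nat.cast_sub (show 1 ≤ 2 * m - n by omega)]
    ring
  have hsucc := factorial_mul_pPoly m (n + 1) h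
  rw [show 2 * m - (n + 1) = 2 * m - n - 1 by omega, sum_stirling2_succ_mul] at hsucc
  calc ((2 * m - n - 1)! : ℝ) * (4 * pPoly (n + 1) m + (2 * m - n) * pPoly n m)
      = 4 * (((2 * m - n - 1)! : ℝ) * pPoly (n + 1) m) + (2 * m - n)! * pPoly n m := by
        rw [hfac]; ring
    _ = ∑ j ∈ range (n + 1),
          stirling2 n j * ((4 * j + 1) * pWeight m j + 4 * pWeight m (j + 1)) := by
        rw [hsucc, factorial_mul_pPoly m n h.le, mul_sum, ← sum_add_distrib]
        exact sum_congr rfl fun j _ => by ring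
    _ = _ := sum_congr rfl fun j hj => by
        rw [four_mul_add_one_mul_pWeight_add m j (by have := mem_range.mp hj; omega)]

theorem stmt6_general (m n : ℕ) (h2mn : 2 * m ≥ n + 1) :
    1 / (2 * 4 ^ m * (Nat.factorial m)) *
        ∑ k ∈ Finset.range (m + 1),
          (m.choose k : ℝ) * (4 * (k : ℝ) + 1) * (2 * (k : ℝ)) ^ n * (-1) ^ k /
            poch ((k : ℝ) + 1 / 2) (m + 1) =
      2 ^ n * (Nat.factorial (2 * m - n - 1)) / ((Nat.factorial m : ℝ) ^ 2 * oddDF (2 * m)) *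
        (4 * pPoly (n + 1) (m : ℝ) + (2 * (m : ℝ) - n) * pPoly n (m : ℝ)) := by
  have hsum : ∑ k ∈ range (m + 1),
      (m.choose k : ℝ) * (4 * (k : ℝ) + 1) * (2 * (k : ℝ)) ^ n * (-1) ^ k /
        poch (k + 1 / 2) (m + 1)
        = 2 ^ n * (((2 * m - n - 1)! : ℝ) * (4 * pPoly (n + 1) m + (2 * m - n) * pPoly n m))
          / (m ! * poch (1 / 2) (2 * m + 1)) := by
    calc _ = 2 ^ n * ∑ k ∈ range (m + 1), (m.choose k : ℝ) *
            ((4 * k + 1) * (-1) ^ k / poch (k + 1 / 2) (m + 1)) * (k : ℝ) ^ n := by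
          rw [mul_sum]
          exact sum_congr rfl fun k _ => by rw [mul_pow]; ring
      _ = 2 ^ n * ∑ j ∈ range (n + 1), stirling2 n j *
            ((4 * m + 1) * j * poch (-m) j * poch (1 / 2) j * (2 * m - j - 1)!
              / (m ! * poch (1 / 2) (2 * m + 1))) := by
          rw [sum_mul_pow_eq_sum_stirling2_mul]
          refine congrArg _ (sum_congr rfl fun j hj => ?_)
          rw [sum_descFactorial_mul_choose_mul_div_poch m j (by have := mem_range.mp hj; omega)]
      _ = _ := by
          rw [factorial_mul_pPoly_combination m n h2mn, mul_div_assoc, sum_div]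
          simp_rw [mul_div_assoc]
  have h4 : (2 : ℝ) ^ (2 * m + 1) = 2 * 4 ^ m := by
    rw [pow_succ, pow_mul]
    norm_num
    ring
  rw [hsum, oddDF_eq_two_pow_mul_poch, h4]
  have := poch_pos (by norm_num : (0 : ℝ) < 1 / 2) (2 * m + 1)
  field_simp

theorem stmt6 (m n : ℕ) (hmn : m ≥ n) (h2mn : 2 * m ≥ n + 1) :
    1 / (2 * 4 ^ m * (Nat.factorial m)) *
        ∑ k ∈ Finset.range (m + 1),
          (m.choose k : ℝ) * (4 * (k : ℝ) + 1) * (2 * (k : ℝ)) ^ n * (-1) ^ k /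
            poch ((k : ℝ) + 1 / 2) (m + 1) =
      2 ^ n * (Nat.factorial (2 * m - n - 1)) / ((Nat.factorial m : ℝ) ^ 2 * oddDF (2 * m)) *
        (4 * pPoly (n + 1) (m : ℝ) + (2 * (m : ℝ) - n) * pPoly n (m : ℝ)) :=
  stmt6_general m n h2mn
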